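/- arXiv:math/0502438 — 3 statements merged into one kernel-verified Lean document; each statement's English description precedes it below -/
import Mathlib

section
/- Let N be a finitely generated graded module over a polynomial ring S = k[x_1,...,x_n] with maximal homogeneous ideal m. Suppose n_1, n_2 are homogeneous elements of N with n_1 not in the submodule generated by n_2 and n_2 not in the submodule generated by n_1, such that the annihilator of n_i is a prime ideal P_i strictly contained in m, and P_1 + P_2 = m. Then the intersection of the cyclic submodules generated by n_1 and by n_2 is zero. -/
open MvPolynomial

/-- Let `N` be a finitely generated graded module over `S = k[x₁,…,xₙ]` with
irrelevant maximal ideal `m`.  If `n₁, n₂` are homogeneous elements of `N`, with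
`n₁ ∉ ⟨n₂⟩` and `n₂ ∉ ⟨n₁⟩`, whose annihilators are prime ideals `P₁, P₂`
strictly contained in `m` with `P₁ + P₂ = m`, then `⟨n₁⟩ ∩ ⟨n₂⟩ = 0`. -/
theorem cyclic_submodules_disjoint {k : Type*} [Field k] {n : ℕ}
    {N : Type*} [AddCommGroup N] [Module (MvPolynomial (Fin n) k) N]
    [Module k N] [IsScalarTower k (MvPolynomial (Fin n) k) N]
    [Module.Finite (MvPolynomial (Fin n) k) N]
    (𝒩 : ℕ → Submodule k N) (hdecomp : DirectSum.IsInternal 𝒩)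
    (hsmul : ∀ i j : ℕ, ∀ s ∈ MvPolynomial.homogeneousSubmodule (Fin n) k i,
      ∀ x ∈ 𝒩 j, s • x ∈ 𝒩 (i + j))
    (n₁ n₂ : N) (d₁ d₂ : ℕ) (hn₁ : n₁ ∈ 𝒩 d₁) (hn₂ : n₂ ∈ 𝒩 d₂)
    (h₁₂ : n₁ ∉ Submodule.span (MvPolynomial (Fin n) k) {n₂})
    (h₂₁ : n₂ ∉ Submodule.span (MvPolynomial (Fin n) k) {n₁})
    (P₁ P₂ : Ideal (MvPolynomial (Fin n) k)) (hP₁ : P₁.IsPrime) (hP₂ : P₂.IsPrime)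
    (hann₁ : P₁ = (Submodule.span (MvPolynomial (Fin n) k) {n₁}).annihilator)
    (hann₂ : P₂ = (Submodule.span (MvPolynomial (Fin n) k) {n₂}).annihilator)
    (hm₁ : P₁ < Ideal.span (Set.range (MvPolynomial.X : Fin n → MvPolynomial (Fin n) k)))
    (hm₂ : P₂ < Ideal.span (Set.range (MvPolynomial.X : Fin n → MvPolynomial (Fin n) k)))
    (hsum : P₁ + P₂ = Ideal.span (Set.range (MvPolynomial.X : Fin n → MvPolynomial (Fin n) k))) :
    Submodule.span (MvPolynomial (Fin n) k) {n₁} ⊓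
      Submodule.span (MvPolynomial (Fin n) k) {n₂} = ⊥ := by
  rw [eq_bot_iff]
  intro x hx
  rw [Submodule.mem_inf] at hx
  obtain ⟨hx1, hx2⟩ := hx
  rw [Submodule.mem_span_singleton] at hx1 hx2
  obtain ⟨s, rfl⟩ := hx1
  obtain ⟨t, ht⟩ := hx2
  by_contra hx
  simp only [Submodule.mem_bot] at hx
  have hs : s ∉ P₁ := by
    intro hs
    rw [hann₁, Submodule.mem_annihilator_span_singleton] at hs
    exact hx hs
  have htP : t ∉ P₂ := by
    intro hti
    rw [hann₂, Submodule.mem_annihilator_span_singleton] at hti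
    exact hx (ht ▸ hti)
  have h12 : P₁ ≤ P₂ := by
    intro r hr
    have : (r * t) • n₂ = 0 := by
      rw [mul_smul, ht, smul_comm]
      rw [hann₁, Submodule.mem_annihilator_span_singleton] at hr
      rw [hr, smul_zero]
    have : r * t ∈ P₂ := by
      rw [hann₂, Submodule.mem_annihilator_span_singleton]; exact this
    exact (hP₂.mem_or_mem this).resolve_right htP
  have h21 : P₂ ≤ P₁ := by
    intro r hr
    have : (r * s) • n₁ = 0 := by
      rw [mul_smul, ← ht, smul_comm]
      rw [hann₂, Submodule.mem_annihilator_span_singleton] at hr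
      rw [hr, smul_zero]
    have : r * s ∈ P₁ := by
      rw [hann₁, Submodule.mem_annihilator_span_singleton]; exact this
    exact (hP₁.mem_or_mem this).resolve_right hs
  have heq : P₁ = P₂ := le_antisymm h12 h21
  have : P₁ = Ideal.span (Set.range (MvPolynomial.X : Fin n → MvPolynomial (Fin n) k)) := by
    rw [← hsum, heq, Submodule.add_eq_sup, sup_idem]
  exact hm₁.ne this
end

section
/- Let f(m) be the coefficient of t^m in the power series (1 + n t + b_2 t² + (b_2 − n + 1) t³)/(1+t)^n for n ≥ 3. Then for m ≥ 2, f(m) = (−1)^m · C(n+m−4, m−2) · (3(m−2) + m·b_2 − (2m−5)n − n²)/m. -/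
open PowerSeries

/-! The numerator vanishes at `t = -1`; expanded in powers of `1 + t` it reads
`(1+t)³ + (n-3) t (1+t)² + (b₂-2n+3) t² (1+t)`, so the series is a combination of
`tⁱ (1+t)^-(n-3+i)` for `i = 0, 1, 2`, whose coefficients of `t^m` all involve binomials with the
same top entry `n + m - 4`. The ratios `C(N, k+1) (k+1) = C(N, k) (N-k)` then collapse the
combination to a multiple of `C(n+m-4, m-2)`. -/

section OneAddXInv

variable {K : Type*} [Field K]

theorem inv_one_add_X_pow_eq_rescale_invOneSubPow (k : ℕ) :
    ((1 + X : K⟦X⟧) ^ k)⁻¹ = rescale (-1) (invOneSubPow K k).val := by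
  rw [inv_eq_iff_mul_eq_one (by simp)]
  have h : (1 + X : K⟦X⟧) ^ k = rescale (-1) ((1 - X) ^ k) := by
    simp [sub_eq_add_neg]
  rw [h, ← map_mul, ← invOneSubPow_inv_eq_one_sub_pow, Units.val_inv, map_one]

theorem coeff_inv_one_add_X_pow (k j : ℕ) :
    coeff j ((1 + X : K⟦X⟧) ^ k)⁻¹ = (-1) ^ j * (k + j - 1).choose j := by
  rcases Nat.eq_zero_or_pos k with rfl | hk
  · rcases Nat.eq_zero_or_pos j with rfl | hj
    · simp
    · simp [coeff_one, hj.ne', Nat.choose_eq_zero_of_lt (Nat.sub_lt hj one_pos)]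
  · rw [inv_one_add_X_pow_eq_rescale_invOneSubPow, coeff_rescale,
      invOneSubPow_val_eq_mk_sub_one_add_choose_of_pos K k hk, coeff_mk,
      Nat.sub_add_comm hk, Nat.choose_symm_add]

theorem one_add_X_pow_mul_inv_one_add_X_pow {j k : ℕ} (h : j ≤ k) :
    (1 + X : K⟦X⟧) ^ j * ((1 + X) ^ k)⁻¹ = ((1 + X) ^ (k - j))⁻¹ := by
  obtain ⟨i, rfl⟩ := Nat.exists_eq_add_of_le h
  rw [Nat.add_sub_cancel_left, pow_add, PowerSeries.mul_inv_rev, mul_left_comm,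
    PowerSeries.mul_inv_cancel _ (by simp), mul_one]

end OneAddXInv

theorem hilbert_choose_combination (n r : ℕ) (hn : 3 ≤ n) (b : ℚ) :
    ((n + r - 2).choose (r + 2) : ℚ) - (n - 3) * (n + r - 2).choose (r + 1)
        + (b - 2 * n + 3) * (n + r - 2).choose r
      = (n + r - 2).choose r * (3 * r + (r + 2) * b - (2 * r - 1) * n - n ^ 2) / (r + 2) := by
  obtain ⟨k, rfl⟩ := Nat.exists_eq_add_of_le' hn
  rw [show k + 3 + r - 2 = k + r + 1 by omega]
  have step₁ := Nat.choose_succ_right_eq (k + r + 1) r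
  have step₂ := Nat.choose_succ_right_eq (k + r + 1) (r + 1)
  rw [show k + r + 1 - r = k + 1 by omega] at step₁
  rw [show k + r + 1 - (r + 1) = k by omega, show r + 1 + 1 = r + 2 from rfl] at step₂
  qify at step₁ step₂
  field_simp
  push_cast
  linear_combination step₂ - k * step₁

/-- For integers `n ≥ 3` and `b₂`, the coefficient of `t^m` (for `m ≥ 2`) in the
formal power series `(1 + n t + b₂ t² + (b₂ − n + 1) t³)/(1+t)^n` over `ℚ` equals
`(−1)^m · C(n+m−4, m−2) · (3(m−2) + m·b₂ − (2m−5)n − n²)/m`. -/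
theorem coeff_hilbert_identity (n : ℕ) (hn : 3 ≤ n) (b₂ : ℤ) :
    ∀ m : ℕ, 2 ≤ m →
      (PowerSeries.coeff (R := ℚ) m)
        ((1 + (n : PowerSeries ℚ) * X + (b₂ : PowerSeries ℚ) * X ^ 2 +
          ((b₂ : PowerSeries ℚ) - (n : PowerSeries ℚ) + 1) * X ^ 3) * ((1 + X) ^ n)⁻¹)
      = (-1) ^ m * ((n + m - 4).choose (m - 2) : ℚ) *
          (3 * ((m : ℚ) - 2) + (m : ℚ) * (b₂ : ℚ) - (2 * (m : ℚ) - 5) * (n : ℚ) -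
            (n : ℚ) ^ 2) / (m : ℚ) := by
  intro m hm
  obtain ⟨r, rfl⟩ := Nat.exists_eq_add_of_le' hm
  have numerator :
      1 + (n : ℚ⟦X⟧) * X + (b₂ : ℚ⟦X⟧) * X ^ 2 + ((b₂ : ℚ⟦X⟧) - (n : ℚ⟦X⟧) + 1) * X ^ 3 =
        (1 + X) ^ 3 + C ((n : ℚ) - 3) * X * (1 + X) ^ 2
          + C ((b₂ : ℚ) - 2 * n + 3) * X ^ 2 * (1 + X) ^ 1 := by
    simp only [map_sub, map_add, map_mul, map_natCast, map_intCast, map_ofNat]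
    ring
  rw [numerator]
  simp only [add_mul, mul_assoc, map_add, coeff_C_mul, coeff_succ_X_mul, coeff_X_pow_mul,
    one_add_X_pow_mul_inv_one_add_X_pow (by omega : 3 ≤ n),
    one_add_X_pow_mul_inv_one_add_X_pow (by omega : 2 ≤ n),
    one_add_X_pow_mul_inv_one_add_X_pow (by omega : 1 ≤ n), coeff_inv_one_add_X_pow]
  rw [show n - 3 + (r + 2) - 1 = n + r - 2 by omega, show n - 2 + (r + 1) - 1 = n + r - 2 by omega,
    show n - 1 + r - 1 = n + r - 2 by omega, show n + (r + 2) - 4 = n + r - 2 by omega,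
    Nat.add_sub_cancel]
  push_cast
  linear_combination (-1) ^ r * hilbert_choose_combination n r hn b₂
end

section
/- Let M be a finitely generated graded module over a polynomial ring S over a field, and suppose every homogeneous element of M is annihilated by one of finitely many pairwise comaximal-off-the-irrelevant-ideal linear primes p_1, ..., p_m (i.e., p_i + p_j equals the irrelevant maximal ideal for i ≠ j). Let M(p_i) = {x ∈ M : ann(x) = p_i}. Then each M(p_i) is a graded submodule of M, and M(p_i) ∩ M(p_j) = 0 for i ≠ j. -/
open MvPolynomial

/-- Let `M` be a finitely generated graded module over `S = k[x₁,…,xₙ]`, and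
suppose every nonzero homogeneous element of `M` has annihilator equal to one of
finitely many distinct linear primes `p₁, …, p_m`, each properly contained in the
irrelevant maximal ideal `m`, which are pairwise comaximal off the irrelevant
ideal (`pᵢ + pⱼ = m` for `i ≠ j`).  Then each
`M(pᵢ) = {x ∈ M : ann(x) = pᵢ} ∪ {0}` is a (graded) submodule of `M`, and
`M(pᵢ) ∩ M(pⱼ) = 0` for `i ≠ j`. -/
theorem isotypic_pieces_are_submodules {k : Type*} [Field k] {n m : ℕ}
    {M : Type*} [AddCommGroup M] [Module (MvPolynomial (Fin n) k) M]
    [Module k M] [IsScalarTower k (MvPolynomial (Fin n) k) M]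
    [Module.Finite (MvPolynomial (Fin n) k) M]
    (𝒩 : ℕ → Submodule k M) (hdecomp : DirectSum.IsInternal 𝒩)
    (hsmul : ∀ i j : ℕ, ∀ s ∈ MvPolynomial.homogeneousSubmodule (Fin n) k i,
      ∀ x ∈ 𝒩 j, s • x ∈ 𝒩 (i + j))
    (p : Fin m → Ideal (MvPolynomial (Fin n) k))
    (hprime : ∀ i, (p i).IsPrime)
    (hlin : ∀ i, ∃ T : Set (MvPolynomial (Fin n) k),
      (∀ s ∈ T, s ∈ MvPolynomial.homogeneousSubmodule (Fin n) k 1) ∧ p i = Ideal.span T)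
    (hdist : Function.Injective p)
    (hne : ∀ i, p i < Ideal.span (Set.range (MvPolynomial.X : Fin n → MvPolynomial (Fin n) k)))
    (hcomax : ∀ i j, i ≠ j →
      p i + p j = Ideal.span (Set.range (MvPolynomial.X : Fin n → MvPolynomial (Fin n) k)))
    (hann : ∀ d : ℕ, ∀ x ∈ 𝒩 d, x ≠ 0 →
      ∃ i, (Submodule.span (MvPolynomial (Fin n) k) {x}).annihilator = p i) :
    ∃ Mp : Fin m → Submodule (MvPolynomial (Fin n) k) M,
      (∀ i, ∀ x : M, x ∈ Mp i ↔
        (x = 0 ∨ (Submodule.span (MvPolynomial (Fin n) k) {x}).annihilator = p i)) ∧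
      ∀ i j, i ≠ j → Mp i ⊓ Mp j = ⊥ := by
  classical
  haveI : DirectSum.Decomposition 𝒩 := hdecomp.chooseDecomposition
  -- p i ≤ p j implies i = j
  have hsub : ∀ i j : Fin m, p i ≤ p j → i = j := by
    intro i j hij
    by_contra h
    have h1 := hcomax i j h
    rw [Submodule.add_eq_sup, sup_eq_right.mpr hij] at h1
    exact absurd h1 (hne j).ne
  -- a homogeneous element killing x kills each graded component of x
  have hkill : ∀ (e : ℕ) (t : MvPolynomial (Fin n) k),
      t ∈ MvPolynomial.homogeneousSubmodule (Fin n) k e →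
      ∀ (x : M), t • x = 0 → ∀ d : ℕ, t • (DirectSum.decompose 𝒩 x d : M) = 0 := by
    intro e t ht x hx d
    by_cases hd : d ∈ (DirectSum.decompose 𝒩 x).support
    · have h1 : t • x = ∑ d' ∈ (DirectSum.decompose 𝒩 x).support,
          t • (DirectSum.decompose 𝒩 x d' : M) := by
        conv_lhs => rw [← DirectSum.sum_support_decompose 𝒩 x]
        rw [Finset.smul_sum]
      have key : (0 : M) = ∑ d' ∈ (DirectSum.decompose 𝒩 x).support,
          ((DirectSum.of (fun j => 𝒩 j) (e + d')
            ⟨t • (DirectSum.decompose 𝒩 x d' : M),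
              hsmul e d' t ht _ (DirectSum.decompose 𝒩 x d').2⟩) (e + d) : M) := by
        calc (0 : M) = ((DirectSum.decompose 𝒩 (t • x)) (e + d) : M) := by
              rw [hx, DirectSum.decompose_zero]; rfl
        _ = _ := by
              rw [h1, DirectSum.decompose_sum, DFinsupp.finset_sum_apply,
                AddSubmonoidClass.coe_finset_sum]
              refine Finset.sum_congr rfl fun d' _ => ?_
              rw [DirectSum.decompose_of_mem 𝒩
                (hsmul e d' t ht _ (DirectSum.decompose 𝒩 x d').2)]
      rw [Finset.sum_eq_single_of_mem d hd (fun d' _ hne' => by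
        rw [DirectSum.of_eq_of_ne _ _ _ (by omega), ZeroMemClass.coe_zero])] at key
      rw [DirectSum.of_eq_same] at key
      exact key.symm
    · rw [DFinsupp.notMem_support_iff.mp hd, ZeroMemClass.coe_zero, smul_zero]
  -- top-degree component of an annihilating polynomial kills the top component of x
  have htopcomp : ∀ (s : MvPolynomial (Fin n) k) (x : M), s • x = 0 →
      ∀ (hne : (DirectSum.decompose 𝒩 x).support.Nonempty),
      (homogeneousComponent s.totalDegree s) •
        ((DirectSum.decompose 𝒩 x ((DirectSum.decompose 𝒩 x).support.max' hne) : M)) = 0 := by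
    intro s x hsx hs
    set N := s.totalDegree with hN
    set D := (DirectSum.decompose 𝒩 x).support.max' hs with hD
    have hmem : ∀ e, homogeneousComponent e s ∈ MvPolynomial.homogeneousSubmodule (Fin n) k e :=
      fun e => homogeneousComponent_mem e s
    have h1 : s • x = ∑ e ∈ Finset.range (N + 1),
        ∑ d ∈ (DirectSum.decompose 𝒩 x).support,
          (homogeneousComponent e s) • (DirectSum.decompose 𝒩 x d : M) := by
      conv_lhs => rw [← sum_homogeneousComponent s, ← DirectSum.sum_support_decompose 𝒩 x]
      rw [Finset.sum_smul]
      exact Finset.sum_congr rfl fun e _ => Finset.smul_sum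
    have key : (0 : M) = ∑ e ∈ Finset.range (N + 1),
        ∑ d ∈ (DirectSum.decompose 𝒩 x).support,
          ((DirectSum.of (fun j => 𝒩 j) (e + d)
            ⟨(homogeneousComponent e s) • (DirectSum.decompose 𝒩 x d : M),
              hsmul e d _ (hmem e) _ (DirectSum.decompose 𝒩 x d).2⟩) (N + D) : M) := by
      calc (0 : M) = ((DirectSum.decompose 𝒩 (s • x)) (N + D) : M) := by
            rw [hsx, DirectSum.decompose_zero]; rfl
      _ = _ := by
            rw [h1, DirectSum.decompose_sum]
            simp_rw [DirectSum.decompose_sum]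
            rw [DFinsupp.finset_sum_apply, AddSubmonoidClass.coe_finset_sum]
            refine Finset.sum_congr rfl fun e _ => ?_
            rw [DFinsupp.finset_sum_apply, AddSubmonoidClass.coe_finset_sum]
            refine Finset.sum_congr rfl fun d _ => ?_
            rw [DirectSum.decompose_of_mem 𝒩
              (hsmul e d _ (hmem e) _ (DirectSum.decompose 𝒩 x d).2)]
    rw [Finset.sum_eq_single_of_mem N (Finset.self_mem_range_succ N) (fun e he hne' => by
      refine Finset.sum_eq_zero fun d hd => ?_
      have he' : e ≤ N := Nat.lt_succ_iff.mp (Finset.mem_range.mp he)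
      have hd' : d ≤ D := Finset.le_max' _ d hd
      rw [DirectSum.of_eq_of_ne _ _ _ (by omega), ZeroMemClass.coe_zero])] at key
    rw [Finset.sum_eq_single_of_mem D (Finset.max'_mem _ hs) (fun d hd hne' => by
      rw [DirectSum.of_eq_of_ne _ _ _ (by omega), ZeroMemClass.coe_zero])] at key
    rw [DirectSum.of_eq_same] at key
    exact key.symm
  -- removing the top homogeneous component decreases total degree
  have hdeg : ∀ s : MvPolynomial (Fin n) k,
      s - homogeneousComponent s.totalDegree s ≠ 0 →
      (s - homogeneousComponent s.totalDegree s).totalDegree < s.totalDegree := by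
    intro s h0
    set N := s.totalDegree with hN
    have hsupp : ∀ d ∈ (s - homogeneousComponent N s).support,
        (d.sum fun _ e => e) < N := by
      intro d hd
      rw [MvPolynomial.mem_support_iff] at hd
      have hcoeff : coeff d (s - homogeneousComponent N s)
          = coeff d s - (if d.degree = N then coeff d s else 0) := by
        rw [coeff_sub, coeff_homogeneousComponent]
      have hdsum : (d.sum fun _ e => e) = d.degree := rfl
      by_cases hdN : d.degree = N
      · rw [hcoeff, if_pos hdN, sub_self] at hd
        exact absurd rfl hd
      · rw [hcoeff, if_neg hdN, sub_zero] at hd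
        have hle : (d.sum fun _ e => e) ≤ N :=
          le_totalDegree (MvPolynomial.mem_support_iff.mpr hd)
        rw [hdsum]
        exact lt_of_le_of_ne (hdsum ▸ hle) hdN
    obtain ⟨d0, hd0⟩ := MvPolynomial.support_nonempty.mpr h0
    have hNpos : 0 < N := lt_of_le_of_lt (Nat.zero_le _) (hsupp d0 hd0)
    rw [MvPolynomial.totalDegree]
    exact (Finset.sup_lt_iff (show ⊥ < N from hNpos)).mpr hsupp
  -- if each nonzero component of x has annihilator p i, so does x (for x ≠ 0)
  have hcomp_to_ann : ∀ (i : Fin m) (x : M), x ≠ 0 →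
      (∀ d : ℕ, (DirectSum.decompose 𝒩 x d : M) ≠ 0 →
        (Submodule.span (MvPolynomial (Fin n) k)
          {(DirectSum.decompose 𝒩 x d : M)}).annihilator = p i) →
      (Submodule.span (MvPolynomial (Fin n) k) {x}).annihilator = p i := by
    intro i x hx H
    have hkillx : ∀ t ∈ p i, t • x = 0 := by
      intro t ht
      conv_lhs => rw [← DirectSum.sum_support_decompose 𝒩 x]
      rw [Finset.smul_sum]
      refine Finset.sum_eq_zero fun d _ => ?_
      by_cases hzd : (DirectSum.decompose 𝒩 x d : M) = 0
      · rw [hzd, smul_zero]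
      · rw [← H d hzd] at ht
        exact (Submodule.mem_annihilator_span_singleton _ _).mp ht
    have hsuppne : (DirectSum.decompose 𝒩 x).support.Nonempty := by
      rw [Finset.nonempty_iff_ne_empty, Ne, DFinsupp.support_eq_empty]
      intro h
      exact hx ((DirectSum.decompose 𝒩).injective
        (h.trans (DirectSum.decompose_zero (ℳ := 𝒩)).symm))
    set D := (DirectSum.decompose 𝒩 x).support.max' hsuppne with hDdef
    have hDne : (DirectSum.decompose 𝒩 x D : M) ≠ 0 := by
      have hmem := Finset.max'_mem _ hsuppne
      rw [DFinsupp.mem_support_iff] at hmem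
      simpa [ZeroMemClass.coe_eq_zero] using hmem
    apply le_antisymm
    · intro s hs
      have hsx : s • x = 0 := (Submodule.mem_annihilator_span_singleton _ _).mp hs
      clear hs
      have key : ∀ nn : ℕ, ∀ s : MvPolynomial (Fin n) k,
          s.totalDegree ≤ nn → s • x = 0 → s ∈ p i := by
        intro nn
        induction nn using Nat.strong_induction_on with
        | _ nn IH =>
          intro s hsn hsx0
          have htop := htopcomp s x hsx0 hsuppne
          have htopmem : homogeneousComponent s.totalDegree s ∈ p i := by
            rw [← H D hDne]
            exact (Submodule.mem_annihilator_span_singleton _ _).mpr htop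
          have htopkill : (homogeneousComponent s.totalDegree s) • x = 0 :=
            hkillx _ htopmem
          have hrest : (s - homogeneousComponent s.totalDegree s) • x = 0 := by
            rw [sub_smul, hsx0, htopkill, sub_zero]
          rcases eq_or_ne (s - homogeneousComponent s.totalDegree s) 0 with h0 | h0
          · have h1 := sub_eq_zero.mp h0
            rw [h1]
            exact htopmem
          · have hlt := hdeg s h0
            have hrec := IH (s - homogeneousComponent s.totalDegree s).totalDegree
              (lt_of_lt_of_le hlt hsn) _ le_rfl hrest
            have := Ideal.add_mem _ hrec htopmem
            simpa using this
      exact key s.totalDegree s le_rfl hsx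
    · intro t ht
      rw [Submodule.mem_annihilator_span_singleton]
      exact hkillx t ht
  -- master lemma: if p i kills w ≠ 0 then ann(w) = p i
  have master : ∀ (i : Fin m) (w : M), w ≠ 0 → (∀ t ∈ p i, t • w = 0) →
      (Submodule.span (MvPolynomial (Fin n) k) {w}).annihilator = p i := by
    intro i w hw hkw
    apply hcomp_to_ann i w hw
    intro d hd
    have hdm : (DirectSum.decompose 𝒩 w d : M) ∈ 𝒩 d := (DirectSum.decompose 𝒩 w d).2
    obtain ⟨j, hj⟩ := hann d _ hdm hd
    obtain ⟨T, hT1, hT2⟩ := hlin i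
    have hij : p i ≤ p j := by
      rw [hT2, Ideal.span_le]
      intro t ht
      have h1 : t • w = 0 := hkw t (hT2 ▸ Ideal.subset_span ht)
      have h2 : t • (DirectSum.decompose 𝒩 w d : M) = 0 := hkill 1 t (hT1 t ht) w h1 d
      rw [SetLike.mem_coe, ← hj, Submodule.mem_annihilator_span_singleton]
      exact h2
    rw [hj]
    exact congrArg p (hsub i j hij).symm
  -- the submodules
  refine ⟨fun i =>
    { carrier := {x | x = 0 ∨
        (Submodule.span (MvPolynomial (Fin n) k) {x}).annihilator = p i}
      zero_mem' := Or.inl rfl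
      add_mem' := ?_
      smul_mem' := ?_ }, ?_, ?_⟩
  · rintro a b (rfl | ha) hb
    · simpa using hb
    · rcases hb with rfl | hb
      · simpa using Or.inr ha
      · rcases eq_or_ne (a + b) 0 with hab | hab
        · exact Or.inl hab
        · refine Or.inr (master i _ hab fun t ht => ?_)
          rw [smul_add]
          rw [← ha] at ht
          have h1 : t • a = 0 := (Submodule.mem_annihilator_span_singleton _ _).mp ht
          rw [ha, ← hb] at ht
          have h2 : t • b = 0 := (Submodule.mem_annihilator_span_singleton _ _).mp ht
          rw [h1, h2, add_zero]
  · rintro s a (rfl | ha)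
    · exact Or.inl (smul_zero s)
    · rcases eq_or_ne (s • a) 0 with hsa | hsa
      · exact Or.inl hsa
      · refine Or.inr (master i _ hsa fun t ht => ?_)
        rw [← ha] at ht
        have h1 : t • a = 0 := (Submodule.mem_annihilator_span_singleton _ _).mp ht
        rw [smul_smul, mul_comm, ← smul_smul, h1, smul_zero]
  · intro i x
    exact Iff.rfl
  · intro i j hij
    rw [Submodule.eq_bot_iff]
    rintro x ⟨hxi, hxj⟩
    rcases hxi with rfl | hxi
    · rfl
    · rcases hxj with rfl | hxj
      · rfl
      · exact absurd (hdist (hxi.symm.trans hxj)) hij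
end
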